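/- The polynomial PP₉(t) = (t+1)²(t+1/2)²(t+1/3)(t+1/6)·t²·(t−1/6) is positive definite on S^{47}: for every positive integer m, all points x₁, …, x_m on the unit sphere of EuclideanSpace ℝ (Fin 48), and all reals c₁, …, c_m, one has ∑_{i,j=1}^{m} c_i c_j · PP₉(⟨x_i, x_j⟩) ≥ 0. -/

import Mathlib

/-!
The kernels `t`, `G₂(t) = t² - 1/48` and `G₃(t) = t³ - 3t/50` are positive definite on `S⁴⁷`:
each is a Gram kernel `⟨φ u, φ v⟩`, with `φ u` the vector `u` itself, resp. the trace-free part
of `u ⊗ u` or of `u ⊗ u ⊗ u`. Positive definite kernels are closed under sums, nonnegative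
multiples and, by the Schur product theorem, products; and `PP₉` is a polynomial in `t`, `G₂`,
`G₃` with nonnegative coefficients.
-/

/-- The ninth partial product of the Newton form at the `T₁` node multiset. -/
noncomputable def PP9 (t : ℝ) : ℝ :=
  (t + 1) ^ 2 * (t + 1/2) ^ 2 * (t + 1/3) * (t + 1/6) * t ^ 2 * (t - 1/6)

open Matrix Finset
open scoped InnerProductSpace

/-- Schoenberg's positive definiteness, which asks for positive *semi*definite matrices. -/
def IsPosDefOnSphere (n : ℕ) (f : ℝ → ℝ) : Prop :=
  ∀ (m : ℕ) (x : Fin m → EuclideanSpace ℝ (Fin n)), (∀ i, ‖x i‖ = 1) →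
    (of fun i j => f ⟪x i, x j⟫_ℝ).PosSemidef

namespace IsPosDefOnSphere

variable {n : ℕ} {f g : ℝ → ℝ}

theorem add (hf : IsPosDefOnSphere n f) (hg : IsPosDefOnSphere n g) :
    IsPosDefOnSphere n (f + g) :=
  fun m x hx => (hf m x hx).add (hg m x hx)

theorem mul (hf : IsPosDefOnSphere n f) (hg : IsPosDefOnSphere n g) :
    IsPosDefOnSphere n (f * g) :=
  fun m x hx => (hf m x hx).hadamard (hg m x hx)

theorem smul (hf : IsPosDefOnSphere n f) {c : ℝ} (hc : 0 ≤ c) : IsPosDefOnSphere n (c • f) :=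
  fun m x hx => (hf m x hx).smul hc

theorem of_dotProduct_eq {S : Type*} [Fintype S] (φ : (Fin n → ℝ) → S → ℝ)
    (hφ : ∀ u v, u ⬝ᵥ u = 1 → v ⬝ᵥ v = 1 → φ u ⬝ᵥ φ v = f (u ⬝ᵥ v)) :
    IsPosDefOnSphere n f := by
  intro m x hx
  have hunit : ∀ i, (x i).ofLp ⬝ᵥ (x i).ofLp = 1 := fun i => by
    have h := real_inner_self_eq_norm_sq (x i)
    rw [hx i, EuclideanSpace.inner_eq_star_dotProduct] at h
    simpa using h
  have hgram : (of fun i j => f ⟪x i, x j⟫_ℝ) = gram ℝ fun i => WithLp.toLp 2 (φ (x i).ofLp) := by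
    ext i j
    simp [EuclideanSpace.inner_eq_star_dotProduct, hφ _ _ (hunit j) (hunit i), dotProduct_comm]
  rw [hgram]
  exact posSemidef_gram ℝ _

theorem id : IsPosDefOnSphere n id :=
  of_dotProduct_eq (fun u => u) fun _ _ _ _ => rfl

theorem one : IsPosDefOnSphere n 1 :=
  of_dotProduct_eq (fun _ (_ : Unit) => 1) fun _ _ _ _ => by simp

theorem pow (hf : IsPosDefOnSphere n f) (k : ℕ) : IsPosDefOnSphere n (f ^ k) := by
  induction k with
  | zero => simpa using one
  | succ k ih => simpa [pow_succ] using ih.mul hf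

theorem sum_sum_mul_nonneg (hf : IsPosDefOnSphere n f) {m : ℕ}
    (x : Fin m → EuclideanSpace ℝ (Fin n)) (hx : ∀ i, ‖x i‖ = 1) (c : Fin m → ℝ) :
    0 ≤ ∑ i, ∑ j, c i * c j * f ⟪x i, x j⟫_ℝ := by
  have := (hf m x hx).dotProduct_mulVec_nonneg c
  simp only [dotProduct, mulVec, star_trivial, of_apply, mul_sum] at this
  simpa only [mul_assoc, mul_comm (f _)] using this

end IsPosDefOnSphere

-- Monic Gegenbauer polynomials of degree 2 and 3 for the sphere `S^{n-1} ⊆ ℝⁿ`.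
noncomputable def gegenbauer2 (n : ℕ) (t : ℝ) : ℝ := t ^ 2 - (n : ℝ)⁻¹

noncomputable def gegenbauer3 (n : ℕ) (t : ℝ) : ℝ := t ^ 3 - 3 * (n + 2 : ℝ)⁻¹ * t

section TraceFree

variable {n : ℕ} (u v : Fin n → ℝ)

-- For a unit vector `u`, `traceFreeSq u` and `traceFreeCube u` are the trace-free parts of
-- `u ⊗ u` and `u ⊗ u ⊗ u`; `symDelta u` is the symmetrisation of `δ ⊗ u`.
noncomputable def traceFreeSq (p : Fin n × Fin n) : ℝ :=
  u p.1 * u p.2 - if p.1 = p.2 then (n : ℝ)⁻¹ else 0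

def symDelta (a b c : Fin n) : ℝ :=
  (if a = b then u c else 0) + (if a = c then u b else 0) + (if b = c then u a else 0)

noncomputable def traceFreeCube (p : Fin n × Fin n × Fin n) : ℝ :=
  u p.1 * u p.2.1 * u p.2.2 - (n + 2 : ℝ)⁻¹ * symDelta u p.1 p.2.1 p.2.2

variable {u v}

theorem traceFreeSq_dotProduct_traceFreeSq (hu : u ⬝ᵥ u = 1) (hv : v ⬝ᵥ v = 1) :
    traceFreeSq u ⬝ᵥ traceFreeSq v = gegenbauer2 n (u ⬝ᵥ v) := by
  have hsq : ∑ a, ∑ b, u a * u b * (v a * v b) = (u ⬝ᵥ v) ^ 2 := by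
    rw [sq, dotProduct, sum_mul_sum]
    exact sum_congr rfl fun _ _ => sum_congr rfl fun _ _ => by ring
  rw [dotProduct] at hu hv ⊢
  simp only [Fintype.sum_prod_type, traceFreeSq, sub_mul, mul_sub, mul_ite, ite_mul,
    mul_zero, zero_mul, sum_sub_distrib, sum_ite_eq, mem_univ, if_true, sum_const, card_univ,
    Fintype.card_fin, nsmul_eq_mul, ← sum_mul, ← mul_sum]
  rw [hsq, hu, hv, gegenbauer2]
  field_simp
  ring

variable (u v)

theorem sum_cube_mul_cube :
    ∑ a, ∑ b, ∑ c, u a * u b * u c * (v a * v b * v c) = (u ⬝ᵥ v) ^ 3 := by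
  simp only [dotProduct, pow_succ, pow_zero, one_mul, sum_mul, mul_sum]
  exact sum_congr rfl fun _ _ => sum_congr rfl fun _ _ => sum_congr rfl fun _ _ => by ring

theorem sum_cube_mul_symDelta :
    ∑ a, ∑ b, ∑ c, u a * u b * u c * symDelta v a b c = 3 * (u ⬝ᵥ u) * (u ⬝ᵥ v) := by
  rw [show 3 * (u ⬝ᵥ u) * (u ⬝ᵥ v) = (u ⬝ᵥ u) * (u ⬝ᵥ v) + (u ⬝ᵥ u) * (u ⬝ᵥ v) + (u ⬝ᵥ v) * (u ⬝ᵥ u)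
    by ring]
  simp only [symDelta, mul_add, mul_ite, mul_zero, sum_add_distrib, sum_ite_eq, mem_univ, if_true,
    sum_ite_irrel, sum_const_zero, dotProduct, sum_mul_sum]
  congr 1; congr 1
  all_goals exact sum_congr rfl fun _ _ => sum_congr rfl fun _ _ => by ring

theorem sum_symDelta_mul_symDelta :
    ∑ a, ∑ b, ∑ c, symDelta u a b c * symDelta v a b c = 3 * (n + 2) * (u ⬝ᵥ v) := by
  simp only [symDelta, mul_add, add_mul, mul_ite, ite_mul, mul_zero, zero_mul, sum_add_distrib,
    sum_ite_eq, sum_ite_eq', mem_univ, if_true, sum_ite_irrel, sum_const_zero, sum_const, card_univ,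
    Fintype.card_fin, nsmul_eq_mul, ← mul_sum, dotProduct]
  ring

variable {u v}

theorem traceFreeCube_dotProduct_traceFreeCube (hu : u ⬝ᵥ u = 1) (hv : v ⬝ᵥ v = 1) :
    traceFreeCube u ⬝ᵥ traceFreeCube v = gegenbauer3 n (u ⬝ᵥ v) := by
  rw [dotProduct, gegenbauer3]
  simp only [Fintype.sum_prod_type, traceFreeCube, sub_mul, mul_sub, sum_sub_distrib,
    mul_left_comm _ ((n + 2 : ℝ)⁻¹), mul_assoc ((n + 2 : ℝ)⁻¹), ← mul_sum]
  simp only [mul_comm (symDelta u _ _ _) (v _ * v _ * v _)]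
  rw [sum_cube_mul_cube, sum_cube_mul_symDelta, sum_cube_mul_symDelta, sum_symDelta_mul_symDelta,
    hu, hv, dotProduct_comm v u]
  field_simp
  ring

end TraceFree

theorem isPosDefOnSphere_gegenbauer2 (n : ℕ) : IsPosDefOnSphere n (gegenbauer2 n) :=
  .of_dotProduct_eq traceFreeSq fun _ _ => traceFreeSq_dotProduct_traceFreeSq

theorem isPosDefOnSphere_gegenbauer3 (n : ℕ) : IsPosDefOnSphere n (gegenbauer3 n) :=
  .of_dotProduct_eq traceFreeCube fun _ _ => traceFreeCube_dotProduct_traceFreeCube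

theorem PP9_eq_gegenbauer_expansion : PP9 =
    (34248943 / 648000000 : ℝ) • gegenbauer3 48 + gegenbauer3 48 ^ 3
      + (5482531 / 2923776000 : ℝ) • gegenbauer2 48
      + (5771 / 5400 : ℝ) • (gegenbauer2 48 * gegenbauer3 48)
      + (10 / 3 : ℝ) • (gegenbauer2 48 * gegenbauer3 48 ^ 2)
      + (4619503 / 30456000 : ℝ) • gegenbauer2 48 ^ 2
      + (1981 / 450 : ℝ) • (gegenbauer2 48 ^ 2 * gegenbauer3 48)
      + (3197 / 1080 : ℝ) • gegenbauer2 48 ^ 3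
      + (48749 / 25000000 : ℝ) • id
      + (11975 / 487296 : ℝ) • (id * gegenbauer3 48) := by
  ext t
  simp only [PP9, gegenbauer2, gegenbauer3, Pi.add_apply, Pi.smul_apply, Pi.mul_apply, Pi.pow_apply,
    id, smul_eq_mul]
  norm_num
  ring

theorem isPosDefOnSphere_PP9 : IsPosDefOnSphere 48 PP9 := by
  have g2 := isPosDefOnSphere_gegenbauer2 48
  have g3 := isPosDefOnSphere_gegenbauer3 48
  rw [PP9_eq_gegenbauer_expansion]
  refine ((((((((((g3.smul ?_).add (g3.pow 3)).add (g2.smul ?_)).add ((g2.mul g3).smul ?_)).add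
    ((g2.mul (g3.pow 2)).smul ?_)).add ((g2.pow 2).smul ?_)).add (((g2.pow 2).mul g3).smul ?_)).add
    ((g2.pow 3).smul ?_)).add (IsPosDefOnSphere.id.smul ?_)).add ((IsPosDefOnSphere.id.mul g3).smul ?_))
  all_goals norm_num

theorem PP9_positive_definite_general (m : ℕ)
    (x : Fin m → EuclideanSpace ℝ (Fin 48)) (hx : ∀ i, ‖x i‖ = 1)
    (c : Fin m → ℝ) :
    0 ≤ ∑ i : Fin m, ∑ j : Fin m, c i * c j * PP9 (inner ℝ (x i) (x j) : ℝ) :=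
  isPosDefOnSphere_PP9.sum_sum_mul_nonneg x hx c

theorem PP9_positive_definite (m : ℕ) (hm : 1 ≤ m)
    (x : Fin m → EuclideanSpace ℝ (Fin 48)) (hx : ∀ i, ‖x i‖ = 1)
    (c : Fin m → ℝ) :
    0 ≤ ∑ i : Fin m, ∑ j : Fin m, c i * c j * PP9 (inner ℝ (x i) (x j) : ℝ) :=
  PP9_positive_definite_general m x hx c
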